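/- Let θ be an invertible antisymmetric real 4×4 matrix, g a symmetric positive definite real 4×4 matrix, e^σ := √(det θ · det g), and J := e^{−σ/2} θ g. Then det J = 1, and J satisfies the characteristic identity J⁴ − (1/2)·tr(J²)·J² + I₄ = 0 (equivalently, J² + 2 e^{−σ} η · I₄ + J^{−2} = 0 where 4 e^{−σ} η := −tr(J²)). -/

import Mathlib

/-!
Writing `g = yᵀ y` with `y` invertible, `y (θ g) y⁻¹ = y θ yᵀ` is antisymmetric, so `J` is
conjugate to an antisymmetric matrix. For a `4 × 4` antisymmetric matrix `A`, `det A` is the square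
of the Pfaffian (hence `det θ > 0`), and a direct computation gives
`A⁴ - ½ tr(A²) A² + det A = 0`; the left-hand side is invariant under conjugation.
The factor `e^{-σ/2}` is the fourth root of `(det θ det g)⁻¹`, which makes `det J = 1`.
-/

open Matrix

theorem Real.sqrt_sqrt_pow_four {x : ℝ} (hx : 0 ≤ x) : √(√x) ^ 4 = x := by
  rw [show 4 = 2 * 2 from rfl, pow_mul, Real.sq_sqrt (Real.sqrt_nonneg x), Real.sq_sqrt hx]

namespace Matrix

section SkewFinFour

variable {R K : Type*} [CommRing R] [Field K]

def skewFinFour (a b c d e f : R) : Matrix (Fin 4) (Fin 4) R :=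
  !![0, a, b, c; -a, 0, d, e; -b, -d, 0, f; -c, -e, -f, 0]

theorem eq_skewFinFour_of_transpose_eq_neg [NeZero (2 : K)] {A : Matrix (Fin 4) (Fin 4) K}
    (hA : Aᵀ = -A) : A = skewFinFour (A 0 1) (A 0 2) (A 0 3) (A 1 2) (A 1 3) (A 2 3) := by
  have h : ∀ i j, A j i = -A i j := fun i j => by simpa using congr_fun₂ hA i j
  have hdiag : ∀ i, A i i = 0 := fun i =>
    mul_left_cancel₀ (two_ne_zero (α := K)) (by linear_combination h i i)
  ext i j
  fin_cases i <;> fin_cases j <;>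
    simp [skewFinFour, hdiag, h 0 1, h 0 2, h 0 3, h 1 2, h 1 3, h 2 3]

theorem det_skewFinFour (a b c d e f : R) :
    (skewFinFour a b c d e f).det = (a * f - b * e + c * d) ^ 2 := by
  simp [skewFinFour, det_succ_row_zero, Fin.sum_univ_succ, Fin.succAbove]
  ring

theorem trace_skewFinFour_sq (a b c d e f : R) :
    (skewFinFour a b c d e f ^ 2).trace =
      -2 * (a ^ 2 + b ^ 2 + c ^ 2 + d ^ 2 + e ^ 2 + f ^ 2) := by
  simp [skewFinFour, sq, trace, Fin.sum_univ_four]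
  ring

theorem skewFinFour_pow_four_add (a b c d e f : R) :
    skewFinFour a b c d e f ^ 4 +
        (a ^ 2 + b ^ 2 + c ^ 2 + d ^ 2 + e ^ 2 + f ^ 2) • skewFinFour a b c d e f ^ 2 +
        (a * f - b * e + c * d) ^ 2 • 1 = 0 := by
  set A := skewFinFour a b c d e f with hA
  rw [show A ^ 4 = A ^ 2 * A ^ 2 by rw [← pow_add], sq, hA]
  ext i j
  fin_cases i <;> fin_cases j <;> simp [skewFinFour] <;> ring

theorem det_pos_of_transpose_eq_neg [LinearOrder K] [IsStrictOrderedRing K]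
    {A : Matrix (Fin 4) (Fin 4) K} (hA : Aᵀ = -A) (hAu : IsUnit A) : 0 < A.det := by
  have hne : A.det ≠ 0 := ((isUnit_iff_isUnit_det A).mp hAu).ne_zero
  have hnonneg : 0 ≤ A.det := by
    rw [eq_skewFinFour_of_transpose_eq_neg hA, det_skewFinFour]
    positivity
  exact hnonneg.lt_of_ne hne.symm

end SkewFinFour

section QuarticCharExpr

variable {n K : Type*} [Fintype n] [DecidableEq n] [Field K]

def quarticCharExpr (A : Matrix n n K) : Matrix n n K :=
  A ^ 4 - ((A ^ 2).trace / 2) • A ^ 2 + A.det • 1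

theorem quarticCharExpr_units_conj (P : (Matrix n n K)ˣ) (A : Matrix n n K) :
    quarticCharExpr ((P : Matrix n n K) * A * (↑P⁻¹ : Matrix n n K)) =
      P * quarticCharExpr A * (↑P⁻¹ : Matrix n n K) := by
  simp only [quarticCharExpr, Units.conj_pow, trace_units_conj, det_units_conj, mul_add, mul_sub,
    add_mul, sub_mul, mul_smul_comm, smul_mul_assoc, mul_one, Units.mul_inv]

theorem quarticCharExpr_skewFinFour [NeZero (2 : K)] (a b c d e f : K) :
    quarticCharExpr (skewFinFour a b c d e f) = 0 := by
  rw [quarticCharExpr, trace_skewFinFour_sq, det_skewFinFour, neg_mul,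
    neg_div, mul_div_cancel_left₀ _ two_ne_zero, neg_smul, sub_neg_eq_add]
  exact skewFinFour_pow_four_add a b c d e f

theorem quarticCharExpr_eq_zero_of_conj_transpose_eq_neg [NeZero (2 : K)]
    {A : Matrix (Fin 4) (Fin 4) K} (P : (Matrix (Fin 4) (Fin 4) K)ˣ)
    (hA : ((P : Matrix (Fin 4) (Fin 4) K) * A * (↑P⁻¹ : Matrix (Fin 4) (Fin 4) K))ᵀ =
      -((P : Matrix (Fin 4) (Fin 4) K) * A * (↑P⁻¹ : Matrix (Fin 4) (Fin 4) K))) :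
    quarticCharExpr A = 0 := by
  have h := quarticCharExpr_units_conj P A
  rw [eq_skewFinFour_of_transpose_eq_neg hA, quarticCharExpr_skewFinFour] at h
  rwa [eq_comm, Units.mul_left_eq_zero, Units.mul_right_eq_zero] at h

end QuarticCharExpr

theorem PosDef.exists_units_conj_mul_transpose_eq_neg {n : Type*} [Fintype n] [DecidableEq n]
    {θ g : Matrix n n ℝ} (hθ : θᵀ = -θ) (hg : g.PosDef) :
    ∃ P : (Matrix n n ℝ)ˣ, ((P : Matrix n n ℝ) * (θ * g) * (↑P⁻¹ : Matrix n n ℝ))ᵀ =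
      -((P : Matrix n n ℝ) * (θ * g) * (↑P⁻¹ : Matrix n n ℝ)) := by
  open scoped MatrixOrder Matrix.Norms.L2Operator in
  obtain ⟨y, hy, rfl⟩ :=
    CStarAlgebra.isStrictlyPositive_iff_eq_star_mul_self.mp hg.isStrictlyPositive
  lift y to (Matrix n n ℝ)ˣ using hy
  refine ⟨y, ?_⟩
  have hconj : (y : Matrix n n ℝ) * (θ * (star (y : Matrix n n ℝ) * y)) * (↑y⁻¹ : Matrix n n ℝ) =
      y * θ * (y : Matrix n n ℝ)ᵀ := by
    simp [star_eq_conjTranspose, mul_assoc]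
  rw [hconj]
  simp [transpose_mul, hθ, mul_assoc]

end Matrix

theorem J_unimodular_and_characteristic_identity
    (θ g J : Matrix (Fin 4) (Fin 4) ℝ)
    (hθ : θᵀ = -θ) (hθu : IsUnit θ) (hg : g.PosDef)
    (hJ : J = (Real.sqrt (Real.sqrt (θ.det * g.det)))⁻¹ • (θ * g)) :
    J.det = 1 ∧ J ^ 4 - ((J ^ 2).trace / 2) • J ^ 2 + 1 = 0 := by
  have hD : 0 < θ.det * g.det := mul_pos (det_pos_of_transpose_eq_neg hθ hθu) hg.det_pos
  have hdet : J.det = 1 := by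
    rw [hJ, det_smul, det_mul, Fintype.card_fin, inv_pow, Real.sqrt_sqrt_pow_four hD.le,
      inv_mul_cancel₀ hD.ne']
  obtain ⟨P, hP⟩ := PosDef.exists_units_conj_mul_transpose_eq_neg hθ hg
  have hJskew : ((P : Matrix (Fin 4) (Fin 4) ℝ) * J * (↑P⁻¹ : Matrix (Fin 4) (Fin 4) ℝ))ᵀ =
      -((P : Matrix (Fin 4) (Fin 4) ℝ) * J * (↑P⁻¹ : Matrix (Fin 4) (Fin 4) ℝ)) := by
    rw [hJ, mul_smul_comm, smul_mul_assoc, transpose_smul, hP, smul_neg]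
  refine ⟨hdet, ?_⟩
  simpa [quarticCharExpr, hdet] using quarticCharExpr_eq_zero_of_conj_transpose_eq_neg P hJskew
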